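/- Consider the system $\frac{dq}{d\zeta} = -2GZq$, $\frac{dG}{d\zeta} = 2G[Z(1-G) - (Z^2+1)^{3/2}q^2]$, $\frac{dZ}{d\zeta} = (3G-1-Zq^2\sqrt{Z^2+1})(Z^2+1)$. The set $\{(q,G,Z) : q > 0,\ 0 < G < 1\}$ is positively invariant: any solution with $q(\zeta_0) > 0$ and $0 < G(\zeta_0) < 1$ satisfies $q(\zeta) > 0$ and $0 < G(\zeta) < 1$ for all $\zeta \ge \zeta_0$ in its interval of existence. -/

import Mathlib

/-!
Each of `q`, `G` and `1 - G` satisfies a linear equation `f' = c f + r` with `c` continuous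
along the solution and `r ≥ 0`: `r = 0` for `q` and `G`, and `r = 2G (Z² + 1)^{3/2} q²` for
`1 - G`, which is nonnegative once `G > 0` is known. With the integrating factor
`exp (-∫ c)` this gives `f ζ ≥ f ζ₀ · exp (∫_{ζ₀}^{ζ} c) > 0`.
-/

open Real Set intervalIntegral

/-- `(q, G, Z)` solves the reduced system (R1E2)-(R1E4) on the set `s`. -/
def EVSol (q G Z : ℝ → ℝ) (s : Set ℝ) : Prop :=
  ∀ ζ ∈ s,
    HasDerivAt q (-(2 * G ζ * Z ζ * q ζ)) ζ ∧
    HasDerivAt G (2 * G ζ * (Z ζ * (1 - G ζ)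
        - Real.sqrt ((Z ζ)^2 + 1)^3 * (q ζ)^2)) ζ ∧
    HasDerivAt Z ((3 * G ζ - 1 - Z ζ * (q ζ)^2 * Real.sqrt ((Z ζ)^2 + 1))
        * ((Z ζ)^2 + 1)) ζ

lemma mul_exp_integral_le_of_hasDerivAt {f c r : ℝ → ℝ} {a b : ℝ} (hab : a ≤ b)
    (hf : ContinuousOn f (Icc a b))
    (hf' : ∀ x ∈ Ioo a b, HasDerivAt f (c x * f x + r x) x)
    (hc : ContinuousOn c (Icc a b)) (hr : ∀ x ∈ Ioo a b, 0 ≤ r x) :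
    f a * exp (∫ x in a..b, c x) ≤ f b := by
  set F : ℝ → ℝ := fun x => ∫ t in a..x, c t
  have hF : ContinuousOn F (Icc a b) := by
    rw [← uIcc_of_le hab] at hc ⊢
    exact continuousOn_primitive_interval (hc.integrableOn_compact isCompact_uIcc)
  have hF' : ∀ x ∈ Ioo a b, HasDerivAt F (c x) x := fun x hx =>
    integral_hasDerivAt_right
      ((hc.mono (Icc_subset_Icc_right hx.2.le)).intervalIntegrable_of_Icc hx.1.le)
      ((hc.mono Ioo_subset_Icc_self).stronglyMeasurableAtFilter isOpen_Ioo x hx)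
      (hc.continuousAt (Icc_mem_nhds hx.1 hx.2))
  have hmono : MonotoneOn (fun x => f x * exp (-F x)) (Icc a b) := by
    refine monotoneOn_of_hasDerivWithinAt_nonneg (f' := fun x => r x * exp (-F x))
      (convex_Icc a b) (hf.mul hF.neg.rexp) ?_ ?_ <;> rw [interior_Icc] <;> intro x hx
    · have h : HasDerivAt (fun x => f x * exp (-F x)) _ x :=
        (hf' x hx).mul (hF' x hx).neg.exp
      exact (h.congr_deriv (by simp only [Pi.neg_apply]; ring)).hasDerivWithinAt
    · exact mul_nonneg (hr x hx) (exp_pos _).le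
  calc f a * exp (F b) = f a * exp (-F a) * exp (F b) := by simp [F]
    _ ≤ f b * exp (-F b) * exp (F b) :=
      mul_le_mul_of_nonneg_right (hmono (left_mem_Icc.2 hab) (right_mem_Icc.2 hab) hab)
        (exp_pos _).le
    _ = f b := by rw [mul_assoc, ← exp_add, neg_add_cancel, exp_zero, mul_one]

lemma pos_of_hasDerivAt_mul_add_nonneg {f c r : ℝ → ℝ} {a b : ℝ}
    (hf : ∀ x ∈ Ico a b, HasDerivAt f (c x * f x + r x) x)
    (hc : ContinuousOn c (Ico a b)) (hr : ∀ x ∈ Ico a b, 0 ≤ r x) (ha : 0 < f a) :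
    ∀ x ∈ Ico a b, 0 < f x := by
  intro x hx
  have hsub : Icc a x ⊆ Ico a b := Icc_subset_Ico_right hx.2
  calc 0 < f a * exp (∫ t in a..x, c t) := by positivity
    _ ≤ f x :=
      mul_exp_integral_le_of_hasDerivAt hx.1
        (fun t ht => (hf t (hsub ht)).continuousAt.continuousWithinAt)
        (fun t ht => hf t (hsub (Ioo_subset_Icc_self ht))) (hc.mono hsub)
        (fun t ht => hr t (hsub (Ioo_subset_Icc_self ht)))

theorem stmt_13 (q G Z : ℝ → ℝ) (ζ0 T : ℝ)
    (hsol : EVSol q G Z (Set.Ico ζ0 T))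
    (hq0 : 0 < q ζ0) (hG0 : 0 < G ζ0 ∧ G ζ0 < 1) :
    ∀ ζ ∈ Set.Ico ζ0 T, 0 < q ζ ∧ 0 < G ζ ∧ G ζ < 1 := by
  have hq : ContinuousOn q (Ico ζ0 T) := fun ζ hζ =>
    (hsol ζ hζ).1.continuousAt.continuousWithinAt
  have hG : ContinuousOn G (Ico ζ0 T) := fun ζ hζ =>
    (hsol ζ hζ).2.1.continuousAt.continuousWithinAt
  have hZ : ContinuousOn Z (Ico ζ0 T) := fun ζ hζ =>
    (hsol ζ hζ).2.2.continuousAt.continuousWithinAt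
  have hq_pos : ∀ ζ ∈ Ico ζ0 T, 0 < q ζ :=
    pos_of_hasDerivAt_mul_add_nonneg (c := fun ζ => -(2 * G ζ * Z ζ)) (r := 0)
      (fun ζ hζ => (hsol ζ hζ).1.congr_deriv (by simp only [Pi.zero_apply]; ring))
      (by fun_prop) (fun _ _ => le_rfl) hq0
  have hG_pos : ∀ ζ ∈ Ico ζ0 T, 0 < G ζ :=
    pos_of_hasDerivAt_mul_add_nonneg
      (c := fun ζ => 2 * (Z ζ * (1 - G ζ) - √(Z ζ ^ 2 + 1) ^ 3 * q ζ ^ 2)) (r := 0)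
      (fun ζ hζ => (hsol ζ hζ).2.1.congr_deriv (by simp only [Pi.zero_apply]; ring))
      (by fun_prop) (fun _ _ => le_rfl) hG0.1
  have hG_lt : ∀ ζ ∈ Ico ζ0 T, 0 < 1 - G ζ :=
    pos_of_hasDerivAt_mul_add_nonneg (f := fun ζ => 1 - G ζ) (c := fun ζ => -(2 * G ζ * Z ζ))
      (r := fun ζ => 2 * G ζ * √(Z ζ ^ 2 + 1) ^ 3 * q ζ ^ 2)
      (fun ζ hζ => ((hsol ζ hζ).2.1.const_sub 1).congr_deriv (by ring))
      (by fun_prop) (fun ζ hζ => by have := hG_pos ζ hζ; positivity) (by linarith [hG0.2])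
  exact fun ζ hζ => ⟨hq_pos ζ hζ, hG_pos ζ hζ, by linarith [hG_lt ζ hζ]⟩
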